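/- Let u : EuclideanSpace ℝ (Fin n) → ℝ be C³ and satisfy Δu(x) + Hess u(x)(∇u(x), ∇u(x)) = 0 for all x (exponential harmonicity). Set e(x) := ‖∇u(x)‖². Then at every point x where e(x) > 0: Δe(x) + Hess e(x)(∇u(x), ∇u(x)) ≥ (1 − e(x)) · ‖∇e(x)‖² / (2 e(x)). -/

import Mathlib

open scoped RealInnerProductSpace
open Real MeasureTheory

noncomputable def Hess {n : ℕ} (f : EuclideanSpace ℝ (Fin n) → ℝ)
    (x v w : EuclideanSpace ℝ (Fin n)) : ℝ :=
  iteratedFDeriv ℝ 2 f x ![v, w]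

noncomputable def lap {n : ℕ} (f : EuclideanSpace ℝ (Fin n) → ℝ)
    (x : EuclideanSpace ℝ (Fin n)) : ℝ :=
  ∑ i, Hess f x (EuclideanSpace.basisFun (Fin n) ℝ i) (EuclideanSpace.basisFun (Fin n) ℝ i)

noncomputable def divg {n : ℕ} (X : EuclideanSpace ℝ (Fin n) → EuclideanSpace ℝ (Fin n))
    (x : EuclideanSpace ℝ (Fin n)) : ℝ :=
  ∑ i, ⟪fderiv ℝ X x (EuclideanSpace.basisFun (Fin n) ℝ i), EuclideanSpace.basisFun (Fin n) ℝ i⟫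

/-! Write `H = ∇²u` and `e = ‖∇u‖²`. Then `∇e = 2 H ∇u`, the flat Bochner formula gives
`Δe = 2 ‖H‖²_HS + 2 ⟪∇u, ∇Δu⟫`, and `Hess e (∇u, ∇u) = 2 D³u (∇u, ∇u, ∇u) + 2 ‖H ∇u‖²`.
Differentiating `Δu = -Hess u (∇u, ∇u)` along `∇u` gives
`⟪∇u, ∇Δu⟫ = -D³u (∇u, ∇u, ∇u) - 2 ‖H ∇u‖²`, so the left-hand side equals
`2 ‖H‖²_HS - 2 ‖H ∇u‖²`, while `‖∇e‖² = 4 ‖H ∇u‖²`. The estimate is thus equivalent to the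
Cauchy–Schwarz inequality `‖H ∇u‖² ≤ e ‖H‖²_HS`. -/

open InnerProductSpace

section ApplyConst

variable {E F G H : Type*} [NormedAddCommGroup E] [NormedSpace ℝ E] [NormedAddCommGroup F]
  [NormedSpace ℝ F] [NormedAddCommGroup G] [NormedSpace ℝ G] [NormedAddCommGroup H]
  [NormedSpace ℝ H] {x : E}

lemma fderiv_clm_apply_const_apply {c : E → F →L[ℝ] G} (hc : DifferentiableAt ℝ c x)
    (b : F) (a : E) :
    fderiv ℝ (fun y => c y b) x a = fderiv ℝ c x a b := by
  simp [fderiv_clm_apply hc (differentiableAt_const b)]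

lemma fderiv_clm_apply_const_apply₂ {c : E → F →L[ℝ] G →L[ℝ] H} (hc : DifferentiableAt ℝ c x)
    (b : F) (d : G) (a : E) :
    fderiv ℝ (fun y => c y b d) x a = fderiv ℝ c x a b d := by
  rw [fderiv_clm_apply_const_apply (hc.clm_apply (differentiableAt_const b)),
    fderiv_clm_apply_const_apply hc]

end ApplyConst

lemma norm_apply_sq_le_sq_mul_sum_norm_apply_sq {ι E F : Type*} [Fintype ι]
    [NormedAddCommGroup E] [InnerProductSpace ℝ E] [NormedAddCommGroup F] [NormedSpace ℝ F]
    (b : OrthonormalBasis ι ℝ E) (L : E →L[ℝ] F) (v : E) :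
    ‖L v‖ ^ 2 ≤ ‖v‖ ^ 2 * ∑ i, ‖L (b i)‖ ^ 2 := by
  have h_triangle : ‖L v‖ ≤ ∑ i, |⟪b i, v⟫| * ‖L (b i)‖ := by
    conv_lhs => rw [← b.sum_repr' v]
    simp only [map_sum, map_smul]
    exact (norm_sum_le _ _).trans_eq (by simp [norm_smul])
  calc ‖L v‖ ^ 2 ≤ (∑ i, |⟪b i, v⟫| * ‖L (b i)‖) ^ 2 := by gcongr
    _ ≤ (∑ i, |⟪b i, v⟫| ^ 2) * ∑ i, ‖L (b i)‖ ^ 2 := Finset.sum_mul_sq_le_sq_mul_sq _ _ _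
    _ = ‖v‖ ^ 2 * ∑ i, ‖L (b i)‖ ^ 2 := by simp only [sq_abs, b.sum_sq_inner_right]

section ThirdDerivative

variable {E : Type*} [NormedAddCommGroup E] [NormedSpace ℝ E] {u : E → ℝ}
  (hu : ContDiff ℝ 3 u)
include hu

lemma ContDiff.differentiableAt_fderiv (x : E) : DifferentiableAt ℝ (fderiv ℝ u) x :=
  (hu.fderiv_right (m := 2) (by norm_num)).differentiable (by norm_num) x

lemma ContDiff.differentiableAt_fderiv_fderiv (x : E) :
    DifferentiableAt ℝ (fderiv ℝ (fderiv ℝ u)) x :=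
  ((hu.fderiv_right (m := 2) (by norm_num)).fderiv_right (m := 1) (by norm_num)).differentiable
    (by norm_num) x

lemma fderiv_fderiv_fderiv_apply_cycle (x a b c : E) :
    fderiv ℝ (fderiv ℝ (fderiv ℝ u)) x a b c = fderiv ℝ (fderiv ℝ (fderiv ℝ u)) x c a b := by
  have h_symm (y : E) : fderiv ℝ (fderiv ℝ u) y b c = fderiv ℝ (fderiv ℝ u) y c b :=
    hu.contDiffAt.isSymmSndFDerivAt (by norm_num [minSmoothness]) b c
  have hD2 := hu.differentiableAt_fderiv_fderiv x
  rw [← fderiv_clm_apply_const_apply₂ hD2, funext h_symm, fderiv_clm_apply_const_apply₂ hD2,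
    (hu.fderiv_right (m := 2) (by norm_num)).contDiffAt.isSymmSndFDerivAt
      (by norm_num [minSmoothness]) a c]

end ThirdDerivative

section Gradient

variable {E : Type*} [NormedAddCommGroup E] [InnerProductSpace ℝ E] [CompleteSpace E]
  {f u : E → ℝ} {x : E}

lemma DifferentiableAt.gradient (hf : DifferentiableAt ℝ (fderiv ℝ f) x) :
    DifferentiableAt ℝ (gradient f) x :=
  (((toDual ℝ E).symm.contDiff (n := 1)).differentiable one_ne_zero _).comp x hf

lemma ContDiff.gradient {m n : WithTop ℕ∞} (hf : ContDiff ℝ n f) (hmn : m + 1 ≤ n) :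
    ContDiff ℝ m (gradient f) :=
  (toDual ℝ E).symm.contDiff.comp (hf.fderiv_right hmn)

lemma inner_fderiv_gradient_left (hf : DifferentiableAt ℝ (fderiv ℝ f) x) (v w : E) :
    ⟪fderiv ℝ (gradient f) x v, w⟫ = fderiv ℝ (fderiv ℝ f) x v w := by
  have h_inner : (fun y => ⟪gradient f y, w⟫) = fun y => fderiv ℝ f y w :=
    funext fun y => inner_gradient_left
  have h_lhs := fderiv_inner_apply ℝ hf.gradient (differentiableAt_const w) v
  rw [h_inner, fderiv_clm_apply_const_apply hf] at h_lhs
  simpa using h_lhs.symm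

lemma fderiv_norm_sq_gradient_apply (hu : DifferentiableAt ℝ (fderiv ℝ u) x) (v : E) :
    fderiv ℝ (fun y => ‖gradient u y‖ ^ 2) x v
      = 2 * fderiv ℝ (fderiv ℝ u) x v (gradient u x) := by
  rw [hu.gradient.hasFDerivAt.norm_sq.fderiv, ← inner_fderiv_gradient_left hu, real_inner_comm]
  simp

lemma gradient_norm_sq_gradient (hu : ContDiffAt ℝ 2 u x) :
    gradient (fun y => ‖gradient u y‖ ^ 2) x
      = (2 : ℝ) • fderiv ℝ (gradient u) x (gradient u x) := by
  have hDu : DifferentiableAt ℝ (fderiv ℝ u) x :=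
    (hu.fderiv_right (m := 1) le_rfl).differentiableAt one_ne_zero
  refine ext_inner_right ℝ fun v => ?_
  rw [inner_gradient_left, fderiv_norm_sq_gradient_apply hDu, real_inner_smul_left,
    inner_fderiv_gradient_left hDu, hu.isSymmSndFDerivAt (by simp)]

lemma fderiv_fderiv_norm_sq_gradient_apply (hu : ContDiff ℝ 3 u) (x v w : E) :
    fderiv ℝ (fderiv ℝ (fun y => ‖gradient u y‖ ^ 2)) x v w
      = 2 * fderiv ℝ (fderiv ℝ (fderiv ℝ u)) x v w (gradient u x)
        + 2 * ⟪fderiv ℝ (gradient u) x v, fderiv ℝ (gradient u) x w⟫ := by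
  have hDe : DifferentiableAt ℝ (fderiv ℝ (fun y => ‖gradient u y‖ ^ 2)) x :=
    ((contDiff_norm_sq ℝ).comp (hu.gradient (m := 2) (by norm_num))).fderiv_right
      (m := 1) le_rfl |>.differentiable one_ne_zero x
  have hD2 := hu.differentiableAt_fderiv_fderiv x
  have hD2w := hD2.clm_apply (differentiableAt_const w)
  rw [← fderiv_clm_apply_const_apply hDe w v,
    funext fun y => fderiv_norm_sq_gradient_apply (hu.differentiableAt_fderiv y) w,
    fderiv_const_mul (hD2w.clm_apply (hu.differentiableAt_fderiv x).gradient),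
    fderiv_clm_apply hD2w (hu.differentiableAt_fderiv x).gradient]
  simp only [smul_add, add_apply, smul_apply, ContinuousLinearMap.comp_apply, smul_eq_mul,
    ContinuousLinearMap.flip_apply]
  rw [fderiv_clm_apply_const_apply hD2, ← inner_fderiv_gradient_left (hu.differentiableAt_fderiv x),
    real_inner_comm (fderiv ℝ (gradient u) x v)]
  ring

end Gradient

section Euclidean

variable {n : ℕ}

lemma Hess_eq_fderiv_fderiv (f : EuclideanSpace ℝ (Fin n) → ℝ) (x v w : EuclideanSpace ℝ (Fin n)) :
    Hess f x v w = fderiv ℝ (fderiv ℝ f) x v w := by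
  simp [Hess, iteratedFDeriv_two_apply]

variable {u : EuclideanSpace ℝ (Fin n) → ℝ} (hu : ContDiff ℝ 3 u)
include hu

lemma fderiv_lap_apply (x a : EuclideanSpace ℝ (Fin n)) :
    fderiv ℝ (lap u) x a = ∑ i, fderiv ℝ (fderiv ℝ (fderiv ℝ u)) x a
      (EuclideanSpace.basisFun (Fin n) ℝ i) (EuclideanSpace.basisFun (Fin n) ℝ i) := by
  have hD2 := hu.differentiableAt_fderiv_fderiv x
  have h_lap : lap u = fun y => ∑ i, fderiv ℝ (fderiv ℝ u) y
      (EuclideanSpace.basisFun (Fin n) ℝ i) (EuclideanSpace.basisFun (Fin n) ℝ i) := by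
    funext y
    simp only [lap, Hess_eq_fderiv_fderiv]
  rw [h_lap, fderiv_fun_sum fun i _ =>
    (hD2.clm_apply (differentiableAt_const _)).clm_apply (differentiableAt_const _)]
  simp only [FunLike.coe_sum, Finset.sum_apply, fderiv_clm_apply_const_apply₂ hD2]

lemma fderiv_Hess_gradient_gradient_apply (x a : EuclideanSpace ℝ (Fin n)) :
    fderiv ℝ (fun y => Hess u y (gradient u y) (gradient u y)) x a
      = fderiv ℝ (fderiv ℝ (fderiv ℝ u)) x a (gradient u x) (gradient u x)
        + 2 * ⟪fderiv ℝ (gradient u) x a, fderiv ℝ (gradient u) x (gradient u x)⟫ := by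
  have hD2 := hu.differentiableAt_fderiv_fderiv x
  have hG := (hu.differentiableAt_fderiv x).gradient
  simp only [Hess_eq_fderiv_fderiv]
  rw [fderiv_clm_apply (hD2.clm_apply hG) hG, fderiv_clm_apply hD2 hG]
  simp only [ContinuousLinearMap.flip_add, add_apply, ContinuousLinearMap.comp_apply,
    ContinuousLinearMap.flip_apply]
  rw [hu.contDiffAt.isSymmSndFDerivAt (by norm_num [minSmoothness]) (fderiv ℝ (gradient u) x a),
    ← inner_fderiv_gradient_left (hu.differentiableAt_fderiv x), real_inner_comm]
  ring

lemma lap_norm_sq_gradient (x : EuclideanSpace ℝ (Fin n)) :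
    lap (fun y => ‖gradient u y‖ ^ 2) x
      = 2 * ∑ i, ‖fderiv ℝ (gradient u) x (EuclideanSpace.basisFun (Fin n) ℝ i)‖ ^ 2
        + 2 * fderiv ℝ (lap u) x (gradient u x) := by
  rw [lap, fderiv_lap_apply hu, Finset.mul_sum, Finset.mul_sum, ← Finset.sum_add_distrib]
  refine Finset.sum_congr rfl fun i _ => ?_
  rw [Hess_eq_fderiv_fderiv, fderiv_fderiv_norm_sq_gradient_apply hu, real_inner_self_eq_norm_sq,
    fderiv_fderiv_fderiv_apply_cycle hu x _ _ (gradient u x)]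
  ring

lemma lap_add_Hess_norm_sq_gradient
    (hharm : ∀ x, lap u x + Hess u x (gradient u x) (gradient u x) = 0)
    (x : EuclideanSpace ℝ (Fin n)) :
    lap (fun y => ‖gradient u y‖ ^ 2) x
        + Hess (fun y => ‖gradient u y‖ ^ 2) x (gradient u x) (gradient u x)
      = 2 * ∑ i, ‖fderiv ℝ (gradient u) x (EuclideanSpace.basisFun (Fin n) ℝ i)‖ ^ 2
        - 2 * ‖fderiv ℝ (gradient u) x (gradient u x)‖ ^ 2 := by
  have h_lap : lap u = fun y => -Hess u y (gradient u y) (gradient u y) :=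
    funext fun y => eq_neg_of_add_eq_zero_left (hharm y)
  have h_fderiv_lap : fderiv ℝ (lap u) x (gradient u x)
      = -(fderiv ℝ (fderiv ℝ (fderiv ℝ u)) x (gradient u x) (gradient u x) (gradient u x)
        + 2 * ‖fderiv ℝ (gradient u) x (gradient u x)‖ ^ 2) := by
    rw [h_lap, fderiv_fun_neg, neg_apply, fderiv_Hess_gradient_gradient_apply hu,
      real_inner_self_eq_norm_sq]
  rw [lap_norm_sq_gradient hu, h_fderiv_lap, Hess_eq_fderiv_fderiv,
    fderiv_fderiv_norm_sq_gradient_apply hu, real_inner_self_eq_norm_sq]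
  ring

end Euclidean

/-- Refined Bochner estimate `Δ̂^{∇u} e ≥ (1-e)‖∇e‖²/(2e)` at points where the
energy density is positive (flat case). -/
theorem stmt_6 {n : ℕ} (u : EuclideanSpace ℝ (Fin n) → ℝ) (hu : ContDiff ℝ 3 u)
    (hharm : ∀ x, lap u x + Hess u x (gradient u x) (gradient u x) = 0)
    (e : EuclideanSpace ℝ (Fin n) → ℝ) (he : e = fun x => ‖gradient u x‖ ^ 2) :
    ∀ x, 0 < e x →
      lap e x + Hess e x (gradient u x) (gradient u x)
        ≥ (1 - e x) * ‖gradient e x‖ ^ 2 / (2 * e x) := by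
  subst he
  intro x (hx : 0 < ‖gradient u x‖ ^ 2)
  have h_cs := norm_apply_sq_le_sq_mul_sum_norm_apply_sq (EuclideanSpace.basisFun (Fin n) ℝ)
    (fderiv ℝ (gradient u) x) (gradient u x)
  rw [lap_add_Hess_norm_sq_gradient hu hharm,
    gradient_norm_sq_gradient ((hu.of_le (by norm_num)).contDiffAt), norm_smul, Real.norm_two,
    ge_iff_le, div_le_iff₀ (by positivity)]
  nlinarith
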